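/- For any bounded linear operators T_1,…,T_n on a complex Hilbert space H, the joint numerical radius satisfies (1/2)·‖T_1T_1^* + ⋯ + T_nT_n^*‖^{1/2} ≤ w(T_1,…,T_n) ≤ ‖T_1T_1^* + ⋯ + T_nT_n^*‖^{1/2}. -/

import Mathlib

noncomputable section

/-- The joint numerical radius of a tuple of operators indexed by a finite set `ι`. -/
def jointNumRad {H : Type*} [NormedAddCommGroup H] [InnerProductSpace ℂ H]
    {ι : Type*} [Fintype ι] (T : ι → H →L[ℂ] H) : ℝ :=
  sSup {x : ℝ | ∃ h : List ι → H, (∑' α : List ι, ‖h α‖ ^ 2) = 1 ∧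
    x = ‖∑' α : List ι, ∑ j : ι, (inner ℂ (h α) ((T j) (h (j :: α))) : ℂ)‖}

namespace JointNumRadAux

/-- Cauchy–Schwarz for tsums of nonnegative reals. -/
lemma tsum_mul_le_sqrt_mul_sqrt {β : Type*} (u w : β → ℝ) (hu : ∀ b, 0 ≤ u b)
    (hw : ∀ b, 0 ≤ w b) (hu2 : Summable fun b => u b ^ 2)
    (hw2 : Summable fun b => w b ^ 2) :
    ∑' b, u b * w b ≤ Real.sqrt (∑' b, u b ^ 2) * Real.sqrt (∑' b, w b ^ 2) := by
  have hs : Summable fun b => u b * w b := by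
    refine Summable.of_nonneg_of_le (fun b => mul_nonneg (hu b) (hw b)) (fun b => ?_)
      ((hu2.add hw2).div_const 2)
    nlinarith [sq_nonneg (u b - w b)]
  refine Summable.tsum_le_of_sum_le hs fun s => ?_
  calc ∑ b ∈ s, u b * w b
      ≤ Real.sqrt (∑ b ∈ s, u b ^ 2) * Real.sqrt (∑ b ∈ s, w b ^ 2) :=
        Real.sum_mul_le_sqrt_mul_sqrt s u w
    _ ≤ Real.sqrt (∑' b, u b ^ 2) * Real.sqrt (∑' b, w b ^ 2) := by
        gcongr
        · exact Summable.sum_le_tsum s (fun b _ => sq_nonneg _) hu2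
        · exact Summable.sum_le_tsum s (fun b _ => sq_nonneg _) hw2

variable {H : Type*} [NormedAddCommGroup H] [InnerProductSpace ℂ H] [CompleteSpace H]
  {ι : Type*} [Fintype ι]

local notation "⟪" x ", " y "⟫" => @inner ℂ _ _ x y

lemma re_inner_S (T : ι → H →L[ℂ] H) (x : H) :
    RCLike.re ⟪x, (∑ i, T i * ContinuousLinearMap.adjoint (T i)) x⟫
      = ∑ j, ‖ContinuousLinearMap.adjoint (T j) x‖ ^ 2 := by
  rw [ContinuousLinearMap.sum_apply, inner_sum, map_sum]
  refine Finset.sum_congr rfl fun j _ => ?_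
  rw [ContinuousLinearMap.mul_apply, ← ContinuousLinearMap.adjoint_inner_left,
    inner_self_eq_norm_sq]

lemma sum_sq_adjoint_le (T : ι → H →L[ℂ] H) (x : H) :
    ∑ j, ‖ContinuousLinearMap.adjoint (T j) x‖ ^ 2
      ≤ ‖∑ i, T i * ContinuousLinearMap.adjoint (T i)‖ * ‖x‖ ^ 2 := by
  rw [← re_inner_S]
  calc RCLike.re ⟪x, (∑ i, T i * ContinuousLinearMap.adjoint (T i)) x⟫
      ≤ ‖x‖ * ‖(∑ i, T i * ContinuousLinearMap.adjoint (T i)) x‖ := re_inner_le_norm _ _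
    _ ≤ ‖x‖ * (‖∑ i, T i * ContinuousLinearMap.adjoint (T i)‖ * ‖x‖) := by
        gcongr; exact ContinuousLinearMap.le_opNorm _ _
    _ = ‖∑ i, T i * ContinuousLinearMap.adjoint (T i)‖ * ‖x‖ ^ 2 := by ring

/-- Row estimate: `‖∑ Tⱼ yⱼ‖ ≤ √M √(∑ ‖yⱼ‖²)`. -/
lemma row_bound (T : ι → H →L[ℂ] H) (y : ι → H) :
    ‖∑ j, T j (y j)‖ ≤ Real.sqrt ‖∑ i, T i * ContinuousLinearMap.adjoint (T i)‖
      * Real.sqrt (∑ j, ‖y j‖ ^ 2) := by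
  set M := ‖∑ i, T i * ContinuousLinearMap.adjoint (T i)‖ with hM
  set x := ∑ j, T j (y j) with hx
  rcases eq_or_lt_of_le (norm_nonneg x) with hx0 | hx0
  · rw [← hx0]
    positivity
  have key : ‖x‖ ^ 2 ≤ Real.sqrt M * Real.sqrt (∑ j, ‖y j‖ ^ 2) * ‖x‖ := by
    have h1 : ‖x‖ ^ 2 = RCLike.re ⟪x, x⟫ := (inner_self_eq_norm_sq x).symm
    rw [h1]
    calc RCLike.re ⟪x, x⟫ = ∑ j, RCLike.re ⟪x, T j (y j)⟫ := by
          rw [hx, inner_sum, map_sum]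
      _ = ∑ j, RCLike.re ⟪ContinuousLinearMap.adjoint (T j) x, y j⟫ := by
          refine Finset.sum_congr rfl fun j _ => ?_
          rw [ContinuousLinearMap.adjoint_inner_left]
      _ ≤ ∑ j, ‖ContinuousLinearMap.adjoint (T j) x‖ * ‖y j‖ :=
          Finset.sum_le_sum fun j _ => re_inner_le_norm _ _
      _ ≤ Real.sqrt (∑ j, ‖ContinuousLinearMap.adjoint (T j) x‖ ^ 2)
            * Real.sqrt (∑ j, ‖y j‖ ^ 2) := Real.sum_mul_le_sqrt_mul_sqrt _ _ _
      _ ≤ Real.sqrt (M * ‖x‖ ^ 2) * Real.sqrt (∑ j, ‖y j‖ ^ 2) := by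
          gcongr
          exact sum_sq_adjoint_le T x
      _ = Real.sqrt M * Real.sqrt (∑ j, ‖y j‖ ^ 2) * ‖x‖ := by
          rw [Real.sqrt_mul (norm_nonneg _), Real.sqrt_sq (norm_nonneg _)]
          ring
  have h2 : ‖x‖ * ‖x‖ ≤ (Real.sqrt M * Real.sqrt (∑ j, ‖y j‖ ^ 2)) * ‖x‖ := by
    calc ‖x‖ * ‖x‖ = ‖x‖ ^ 2 := (sq ‖x‖).symm
      _ ≤ Real.sqrt M * Real.sqrt (∑ j, ‖y j‖ ^ 2) * ‖x‖ := key
  exact le_of_mul_le_mul_right h2 hx0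

/-- Approximate attainment of `√M` by row vectors. -/
lemma row_sup (T : ι → H →L[ℂ] H) (c : ℝ)
    (hc : c < Real.sqrt ‖∑ i, T i * ContinuousLinearMap.adjoint (T i)‖) :
    ∃ y : ι → H, (∑ j, ‖y j‖ ^ 2) ≤ 1 ∧ c < ‖∑ j, T j (y j)‖ := by
  set M := ‖∑ i, T i * ContinuousLinearMap.adjoint (T i)‖ with hM
  set Sy : Set ℝ := {r : ℝ | ∃ y : ι → H, (∑ j, ‖y j‖ ^ 2) ≤ 1 ∧ r = ‖∑ j, T j (y j)‖}
    with hSy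
  have h0mem : (0 : ℝ) ∈ Sy := ⟨0, by simp, by simp⟩
  have hne : Sy.Nonempty := ⟨0, h0mem⟩
  have hbdd : BddAbove Sy := by
    refine ⟨∑ j, ‖T j‖, ?_⟩
    rintro r ⟨y, hy1, rfl⟩
    have hyj : ∀ j, ‖y j‖ ≤ 1 := by
      intro j
      have h1 : ‖y j‖ ^ 2 ≤ 1 :=
        le_trans (Finset.single_le_sum (f := fun j => ‖y j‖ ^ 2)
          (fun j _ => sq_nonneg _) (Finset.mem_univ j)) hy1
      nlinarith [norm_nonneg (y j)]
    calc ‖∑ j, T j (y j)‖ ≤ ∑ j, ‖T j (y j)‖ := norm_sum_le _ _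
      _ ≤ ∑ j, ‖T j‖ := Finset.sum_le_sum fun j _ => by
          calc ‖T j (y j)‖ ≤ ‖T j‖ * ‖y j‖ := ContinuousLinearMap.le_opNorm _ _
            _ ≤ ‖T j‖ * 1 := by gcongr; exact hyj j
            _ = ‖T j‖ := mul_one _
  set L := sSup Sy with hL
  have hL0 : 0 ≤ L := le_csSup hbdd h0mem
  -- step (i)
  have hstep1 : ∀ y : ι → H, ‖∑ j, T j (y j)‖ ≤ L * Real.sqrt (∑ j, ‖y j‖ ^ 2) := by
    intro y
    set s := Real.sqrt (∑ j, ‖y j‖ ^ 2) with hs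
    rcases eq_or_lt_of_le (Real.sqrt_nonneg (∑ j, ‖y j‖ ^ 2)) with hs0 | hs0
    · have hsum0 : (∑ j, ‖y j‖ ^ 2) = 0 :=
        le_antisymm (Real.sqrt_eq_zero'.mp hs0.symm)
          (Finset.sum_nonneg fun j _ => sq_nonneg _)
      have hy0 : ∀ j, y j = 0 := by
        intro j
        have := (Finset.sum_eq_zero_iff_of_nonneg fun j _ => sq_nonneg (‖y j‖)).mp hsum0
          j (Finset.mem_univ j)
        simpa [pow_eq_zero_iff] using this
      simp only [hy0, map_zero, Finset.sum_const_zero, norm_zero]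
      exact mul_nonneg hL0 (Real.sqrt_nonneg _)
    · have h1 : (∑ j, ‖((s⁻¹ : ℝ) : ℂ) • y j‖ ^ 2) ≤ 1 := by
        have hsq : s ^ 2 = ∑ j, ‖y j‖ ^ 2 :=
          Real.sq_sqrt (Finset.sum_nonneg fun j _ => sq_nonneg _)
        have heq : (∑ j, ‖((s⁻¹ : ℝ) : ℂ) • y j‖ ^ 2) = s⁻¹ ^ 2 * ∑ j, ‖y j‖ ^ 2 := by
          rw [Finset.mul_sum]
          refine Finset.sum_congr rfl fun j _ => ?_
          rw [norm_smul, Complex.norm_real, Real.norm_eq_abs, abs_of_nonneg (le_of_lt (inv_pos.mpr hs0)),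
            mul_pow]
        rw [heq, ← hsq, inv_pow, inv_mul_le_iff₀ (by positivity)]
        simp
      have hmem : ‖∑ j, T j (((s⁻¹ : ℝ) : ℂ) • y j)‖ ∈ Sy := ⟨_, h1, rfl⟩
      have hle : ‖∑ j, T j (((s⁻¹ : ℝ) : ℂ) • y j)‖ ≤ L := le_csSup hbdd hmem
      have heq : ‖∑ j, T j (((s⁻¹ : ℝ) : ℂ) • y j)‖ = s⁻¹ * ‖∑ j, T j (y j)‖ := by
        have hsm : (∑ j, T j (((s⁻¹ : ℝ) : ℂ) • y j)) = ((s⁻¹ : ℝ) : ℂ) • ∑ j, T j (y j) := by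
          rw [Finset.smul_sum]
          exact Finset.sum_congr rfl fun j _ => (T j).map_smul _ _
        rw [hsm, norm_smul, Complex.norm_real, Real.norm_eq_abs, abs_of_nonneg (le_of_lt (inv_pos.mpr hs0))]
      rw [heq] at hle
      calc ‖∑ j, T j (y j)‖ = s * (s⁻¹ * ‖∑ j, T j (y j)‖) := by
            rw [← mul_assoc, mul_inv_cancel₀ (ne_of_gt hs0), one_mul]
        _ ≤ s * L := mul_le_mul_of_nonneg_left hle (le_of_lt hs0)
        _ = L * s := mul_comm _ _
  -- step (ii)
  have hstep2 : ∀ x : H,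
      Real.sqrt (∑ j, ‖ContinuousLinearMap.adjoint (T j) x‖ ^ 2) ≤ L * ‖x‖ := by
    intro x
    set q := ∑ j, ‖ContinuousLinearMap.adjoint (T j) x‖ ^ 2 with hq
    have hq0 : 0 ≤ q := Finset.sum_nonneg fun j _ => sq_nonneg _
    rcases eq_or_lt_of_le (Real.sqrt_nonneg q) with h0 | h0
    · rw [← h0]
      exact mul_nonneg hL0 (norm_nonneg _)
    have hkey : q ≤ ‖x‖ * (L * Real.sqrt q) := by
      calc q = RCLike.re ⟪x, (∑ i, T i * ContinuousLinearMap.adjoint (T i)) x⟫ :=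
            (re_inner_S T x).symm
        _ ≤ ‖x‖ * ‖(∑ i, T i * ContinuousLinearMap.adjoint (T i)) x‖ := re_inner_le_norm _ _
        _ = ‖x‖ * ‖∑ j, T j (ContinuousLinearMap.adjoint (T j) x)‖ := by
            rw [ContinuousLinearMap.sum_apply]
            simp only [ContinuousLinearMap.mul_apply]
        _ ≤ ‖x‖ * (L * Real.sqrt q) := by
            gcongr
            exact hstep1 _
    have hq' : Real.sqrt q * Real.sqrt q ≤ (L * ‖x‖) * Real.sqrt q := by
      rw [Real.mul_self_sqrt hq0]
      calc q ≤ ‖x‖ * (L * Real.sqrt q) := hkey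
        _ = (L * ‖x‖) * Real.sqrt q := by ring
    exact le_of_mul_le_mul_right hq' h0
  -- conclude √M ≤ L
  have hML : Real.sqrt M ≤ L := by
    have hSle : ∀ x : H,
        ‖(∑ i, T i * ContinuousLinearMap.adjoint (T i)) x‖ ≤ (L * L) * ‖x‖ := by
      intro x
      calc ‖(∑ i, T i * ContinuousLinearMap.adjoint (T i)) x‖
          = ‖∑ j, T j (ContinuousLinearMap.adjoint (T j) x)‖ := by
            rw [ContinuousLinearMap.sum_apply]
            simp only [ContinuousLinearMap.mul_apply]
        _ ≤ L * Real.sqrt (∑ j, ‖ContinuousLinearMap.adjoint (T j) x‖ ^ 2) := hstep1 _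
        _ ≤ L * (L * ‖x‖) := by gcongr; exact hstep2 x
        _ = (L * L) * ‖x‖ := by ring
    have hM2 : M ≤ L * L :=
      ContinuousLinearMap.opNorm_le_bound _ (mul_nonneg hL0 hL0) hSle
    calc Real.sqrt M ≤ Real.sqrt (L * L) := Real.sqrt_le_sqrt hM2
      _ = L := Real.sqrt_mul_self hL0
  have hcL : c < L := lt_of_lt_of_le hc hML
  obtain ⟨r, ⟨y, hy1, rfl⟩, hcr⟩ := exists_lt_of_lt_csSup hne hcL
  exact ⟨y, hy1, hcr⟩

/-- The two-level family used to witness membership in the numerical-radius set. -/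
def pairFam (a : H) (y : ι → H) : List ι → H
  | [] => a
  | [j] => y j
  | _ => 0

omit [InnerProductSpace ℂ H] [CompleteSpace H] [Fintype ι] in
lemma pairFam_nil (a : H) (y : ι → H) : pairFam a y [] = a := rfl
omit [InnerProductSpace ℂ H] [CompleteSpace H] [Fintype ι] in
lemma pairFam_single (a : H) (y : ι → H) (j : ι) : pairFam a y [j] = y j := rfl
omit [InnerProductSpace ℂ H] [CompleteSpace H] [Fintype ι] in
lemma pairFam_long (a : H) (y : ι → H) (j k : ι) (t : List ι) :
    pairFam a y (j :: k :: t) = 0 := rfl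

lemma mem_aux (T : ι → H →L[ℂ] H) (a : H) (y : ι → H)
    (hsum : ‖a‖ ^ 2 + ∑ j, ‖y j‖ ^ 2 = 1) :
    ∃ h : List ι → H, (∑' α : List ι, ‖h α‖ ^ 2) = 1 ∧
      ‖(inner ℂ a (∑ j, T j (y j)) : ℂ)‖
        = ‖∑' α : List ι, ∑ j : ι, (inner ℂ (h α) ((T j) (h (j :: α))) : ℂ)‖ := by
  classical
  refine ⟨pairFam a y, ?_, ?_⟩
  · have hsupp : ∀ α ∉ (insert ([] : List ι) (Finset.univ.image fun j => [j])),
        ‖pairFam a y α‖ ^ 2 = 0 := by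
      intro α hα
      rcases α with _ | ⟨j, _ | ⟨k, t⟩⟩
      · simp at hα
      · exact absurd (by
          simp only [Finset.mem_insert, Finset.mem_image]
          exact Or.inr ⟨j, Finset.mem_univ j, rfl⟩) hα
      · rw [pairFam_long]
        simp
    rw [tsum_eq_sum hsupp, Finset.sum_insert (by simp),
      Finset.sum_image (fun x _ x' _ hxx' => by simpa using hxx')]
    simp only [pairFam_nil, pairFam_single]
    exact hsum
  · have hsupp2 : ∀ α ∉ ({[]} : Finset (List ι)),
        (∑ j : ι, (inner ℂ (pairFam a y α) ((T j) (pairFam a y (j :: α))) : ℂ)) = 0 := by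
      intro α hα
      rcases α with _ | ⟨k, t⟩
      · simp at hα
      · refine Finset.sum_eq_zero fun j _ => ?_
        rw [pairFam_long]
        simp
    rw [tsum_eq_sum hsupp2, Finset.sum_singleton]
    simp only [pairFam_nil, pairFam_single]
    rw [inner_sum]

end JointNumRadAux

open JointNumRadAux in
/-- `(1/2)·‖T_1T_1^* + ⋯ + T_nT_n^*‖^{1/2} ≤ w(T_1,…,T_n) ≤ ‖T_1T_1^* + ⋯ + T_nT_n^*‖^{1/2}`. -/
theorem jointNumRad_le_rowNorm {H : Type*} [NormedAddCommGroup H]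
    [InnerProductSpace ℂ H] [CompleteSpace H] {n : ℕ} (T : Fin n → H →L[ℂ] H) :
    (1 / 2) * Real.sqrt ‖∑ i, T i * ContinuousLinearMap.adjoint (T i)‖ ≤ jointNumRad T ∧
      jointNumRad T ≤ Real.sqrt ‖∑ i, T i * ContinuousLinearMap.adjoint (T i)‖ := by
  classical
  set M := ‖∑ i, T i * ContinuousLinearMap.adjoint (T i)‖ with hM
  set s : Set ℝ := {x : ℝ | ∃ h : List (Fin n) → H, (∑' α : List (Fin n), ‖h α‖ ^ 2) = 1 ∧
    x = ‖∑' α : List (Fin n), ∑ j : Fin n, (inner ℂ (h α) ((T j) (h (j :: α))) : ℂ)‖} with hs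
  have hjs : jointNumRad T = sSup s := rfl
  -- the pointwise upper bound
  have hub : ∀ x ∈ s, x ≤ Real.sqrt M := by
    rintro x ⟨h, hnorm, rfl⟩
    have hg : Summable (fun α : List (Fin n) => ‖h α‖ ^ 2) := by
      by_contra hc
      rw [tsum_eq_zero_of_not_summable hc] at hnorm
      norm_num at hnorm
    set e : Fin n × List (Fin n) → List (Fin n) := fun p => p.1 :: p.2 with he
    have hei : Function.Injective e := by
      rintro ⟨a, b⟩ ⟨c, d⟩ hp
      simpa [he, Prod.ext_iff] using hp
    have hge : Summable (fun p : Fin n × List (Fin n) => ‖h (e p)‖ ^ 2) :=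
      hg.comp_injective hei
    have hcons : ∀ j : Fin n, Summable (fun α : List (Fin n) => ‖h (j :: α)‖ ^ 2) := by
      intro j
      exact hg.comp_injective (fun a b hab => by simpa using hab)
    have hφs : Summable (fun α : List (Fin n) => ∑ j, ‖h (j :: α)‖ ^ 2) :=
      summable_sum (fun j _ => hcons j)
    have hφle : (∑' α : List (Fin n), ∑ j, ‖h (j :: α)‖ ^ 2) ≤ 1 := by
      have h1 : (∑' α : List (Fin n), ∑ j, ‖h (j :: α)‖ ^ 2)
          = ∑' p : Fin n × List (Fin n), ‖h (e p)‖ ^ 2 := by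
        rw [Summable.tsum_prod' hge (fun j => hcons j)]
        rw [tsum_fintype (f := fun j : Fin n => ∑' α : List (Fin n), ‖h (j :: α)‖ ^ 2)]
        exact Summable.tsum_finsetSum (fun j _ => hcons j)
      rw [h1, ← hnorm]
      exact Summable.tsum_le_tsum_of_inj e hei (fun c _ => sq_nonneg _) (fun p => le_rfl) hge hg
    have hvb : ∀ α : List (Fin n), ‖∑ j, T j (h (j :: α))‖
        ≤ Real.sqrt M * Real.sqrt (∑ j, ‖h (j :: α)‖ ^ 2) := fun α => row_bound T _
    have hFb : ∀ α : List (Fin n),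
        ‖∑ j : Fin n, (inner ℂ (h α) ((T j) (h (j :: α))) : ℂ)‖
          ≤ Real.sqrt M * (‖h α‖ * Real.sqrt (∑ j, ‖h (j :: α)‖ ^ 2)) := by
      intro α
      have h1 : (∑ j : Fin n, (inner ℂ (h α) ((T j) (h (j :: α))) : ℂ))
          = (inner ℂ (h α) (∑ j, T j (h (j :: α))) : ℂ) := (inner_sum _ _ _).symm
      rw [h1]
      calc ‖(inner ℂ (h α) (∑ j, T j (h (j :: α))) : ℂ)‖
          ≤ ‖h α‖ * ‖∑ j, T j (h (j :: α))‖ := norm_inner_le_norm _ _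
        _ ≤ ‖h α‖ * (Real.sqrt M * Real.sqrt (∑ j, ‖h (j :: α)‖ ^ 2)) :=
            mul_le_mul_of_nonneg_left (hvb α) (norm_nonneg _)
        _ = Real.sqrt M * (‖h α‖ * Real.sqrt (∑ j, ‖h (j :: α)‖ ^ 2)) := by ring
    have hsummand : Summable (fun α : List (Fin n) =>
        ‖h α‖ * Real.sqrt (∑ j, ‖h (j :: α)‖ ^ 2)) := by
      refine Summable.of_nonneg_of_le
        (fun α => mul_nonneg (norm_nonneg _) (Real.sqrt_nonneg _)) (fun α => ?_)
        ((hg.add hφs).div_const 2)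
      have h1 : Real.sqrt (∑ j, ‖h (j :: α)‖ ^ 2) ^ 2 = ∑ j, ‖h (j :: α)‖ ^ 2 :=
        Real.sq_sqrt (Finset.sum_nonneg fun _ _ => sq_nonneg _)
      nlinarith [sq_nonneg (‖h α‖ - Real.sqrt (∑ j, ‖h (j :: α)‖ ^ 2))]
    have hsummand' : Summable (fun α : List (Fin n) =>
        Real.sqrt M * (‖h α‖ * Real.sqrt (∑ j, ‖h (j :: α)‖ ^ 2))) := hsummand.mul_left _
    have hnorms : Summable (fun α : List (Fin n) =>
        ‖∑ j : Fin n, (inner ℂ (h α) ((T j) (h (j :: α))) : ℂ)‖) :=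
      Summable.of_nonneg_of_le (fun α => norm_nonneg _) hFb hsummand'
    calc ‖∑' α : List (Fin n), ∑ j : Fin n, (inner ℂ (h α) ((T j) (h (j :: α))) : ℂ)‖
        ≤ ∑' α : List (Fin n), ‖∑ j : Fin n, (inner ℂ (h α) ((T j) (h (j :: α))) : ℂ)‖ :=
          norm_tsum_le_tsum_norm hnorms
      _ ≤ ∑' α : List (Fin n), Real.sqrt M * (‖h α‖ * Real.sqrt (∑ j, ‖h (j :: α)‖ ^ 2)) :=
          Summable.tsum_le_tsum hFb hnorms hsummand'
      _ = Real.sqrt M * ∑' α : List (Fin n), ‖h α‖ * Real.sqrt (∑ j, ‖h (j :: α)‖ ^ 2) :=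
          tsum_mul_left
      _ ≤ Real.sqrt M * 1 := by
          have hw2 : Summable (fun α : List (Fin n) =>
              Real.sqrt (∑ j, ‖h (j :: α)‖ ^ 2) ^ 2) := by
            refine hφs.congr fun α => ?_
            rw [Real.sq_sqrt (Finset.sum_nonneg fun _ _ => sq_nonneg _)]
          have hcs := tsum_mul_le_sqrt_mul_sqrt (fun α : List (Fin n) => ‖h α‖)
            (fun α => Real.sqrt (∑ j, ‖h (j :: α)‖ ^ 2)) (fun α => norm_nonneg _)
            (fun α => Real.sqrt_nonneg _) hg hw2
          have heq2 : (∑' α : List (Fin n), Real.sqrt (∑ j, ‖h (j :: α)‖ ^ 2) ^ 2)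
              = ∑' α : List (Fin n), ∑ j, ‖h (j :: α)‖ ^ 2 :=
            tsum_congr fun α => Real.sq_sqrt (Finset.sum_nonneg fun _ _ => sq_nonneg _)
          have hfinal : (∑' α : List (Fin n), ‖h α‖ * Real.sqrt (∑ j, ‖h (j :: α)‖ ^ 2)) ≤ 1 := by
            calc (∑' α : List (Fin n), ‖h α‖ * Real.sqrt (∑ j, ‖h (j :: α)‖ ^ 2))
                ≤ Real.sqrt (∑' α : List (Fin n), ‖h α‖ ^ 2)
                  * Real.sqrt (∑' α : List (Fin n),
                    Real.sqrt (∑ j, ‖h (j :: α)‖ ^ 2) ^ 2) := hcs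
              _ ≤ 1 := by
                  rw [hnorm, heq2, Real.sqrt_one, one_mul]
                  calc Real.sqrt (∑' α : List (Fin n), ∑ j, ‖h (j :: α)‖ ^ 2)
                      ≤ Real.sqrt 1 := Real.sqrt_le_sqrt hφle
                    _ = 1 := Real.sqrt_one
          exact mul_le_mul_of_nonneg_left hfinal (Real.sqrt_nonneg M)
      _ = Real.sqrt M := mul_one _
  have hbdd : BddAbove s := ⟨Real.sqrt M, hub⟩
  have upper : jointNumRad T ≤ Real.sqrt M := by
    rw [hjs]
    exact Real.sSup_le hub (Real.sqrt_nonneg M)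
  refine ⟨?_, upper⟩
  -- lower bound
  rw [hjs]
  refine le_of_forall_lt fun b hb => ?_
  rcases lt_or_ge b 0 with hb0 | hb0
  · calc b < 0 := hb0
      _ ≤ sSup s := Real.sSup_nonneg (by rintro x ⟨h, _, rfl⟩; positivity)
  · obtain ⟨y, hy1, hyb⟩ := row_sup T (2 * b) (by rw [← hM]; linarith)
    set u : H := ∑ j, T j (y j) with hu
    have hub' : 0 < ‖u‖ := lt_of_le_of_lt (by linarith) hyb
    set t := ∑ j, ‖y j‖ ^ 2 with ht
    have ht0 : 0 ≤ t := Finset.sum_nonneg fun j _ => sq_nonneg _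
    have htpos : 0 < t := by
      rcases eq_or_lt_of_le ht0 with h0 | h0
      · exfalso
        have hy0 : ∀ j, y j = 0 := by
          intro j
          have := (Finset.sum_eq_zero_iff_of_nonneg fun j _ => sq_nonneg (‖y j‖)).mp h0.symm
            j (Finset.mem_univ j)
          simpa [pow_eq_zero_iff] using this
        have hu0 : u = 0 := by simp [hu, hy0]
        rw [hu0] at hub'
        simp at hub'
      · exact h0
    set c : ℝ := (Real.sqrt 2)⁻¹ * ‖u‖⁻¹ with hc
    set d : ℝ := (Real.sqrt 2 * Real.sqrt t)⁻¹ with hd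
    have hc0 : 0 ≤ c := by positivity
    have hd0 : 0 ≤ d := by positivity
    have htp : (0 : ℝ) < Real.sqrt t := Real.sqrt_pos.mpr htpos
    have hhalf : (Real.sqrt 2)⁻¹ * (Real.sqrt 2)⁻¹ = 1 / 2 := by
      rw [← mul_inv, Real.mul_self_sqrt (by norm_num : (0:ℝ) ≤ 2)]
      norm_num
    -- membership
    have hnormsum : ‖(c : ℂ) • u‖ ^ 2 + ∑ j, ‖(d : ℂ) • y j‖ ^ 2 = 1 := by
      have h1 : ‖(c : ℂ) • u‖ ^ 2 = 1 / 2 := by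
        rw [norm_smul, Complex.norm_real, Real.norm_eq_abs, abs_of_nonneg hc0, hc, mul_assoc,
          inv_mul_cancel₀ (ne_of_gt hub'), mul_one, inv_pow,
          Real.sq_sqrt (by norm_num : (0:ℝ) ≤ 2)]
        norm_num
      have h2 : (∑ j, ‖(d : ℂ) • y j‖ ^ 2) = 1 / 2 := by
        have hd2 : d ^ 2 = (2 * t)⁻¹ := by
          rw [hd, inv_pow, mul_pow, Real.sq_sqrt (by norm_num : (0:ℝ) ≤ 2),
            Real.sq_sqrt ht0]
        have hsum2 : (∑ j, ‖(d : ℂ) • y j‖ ^ 2) = d ^ 2 * t := by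
          rw [ht, Finset.mul_sum]
          refine Finset.sum_congr rfl fun j _ => ?_
          rw [norm_smul, Complex.norm_real, Real.norm_eq_abs, abs_of_nonneg hd0, mul_pow]
        rw [hsum2, hd2]
        field_simp
      rw [h1, h2]
      norm_num
    obtain ⟨h, hh1, hh2⟩ := mem_aux T ((c : ℂ) • u) (fun j => (d : ℂ) • y j) hnormsum
    have hval : ‖(inner ℂ ((c : ℂ) • u) (∑ j, T j ((d : ℂ) • y j)) : ℂ)‖
        = c * d * ‖u‖ ^ 2 := by
      have hsum' : (∑ j, T j ((d : ℂ) • y j)) = (d : ℂ) • u := by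
        rw [hu, Finset.smul_sum]
        exact Finset.sum_congr rfl fun j _ => (T j).map_smul _ _
      rw [hsum', inner_smul_left, inner_smul_right, inner_self_eq_norm_sq_to_K]
      simp only [norm_mul, RCLike.norm_conj, Complex.norm_real, RCLike.norm_ofReal,
        Real.norm_eq_abs, norm_pow, abs_norm,
        abs_of_nonneg hc0, abs_of_nonneg hd0, abs_of_nonneg (norm_nonneg u)]
      ring
    have hmem : c * d * ‖u‖ ^ 2 ∈ s := ⟨h, hh1, by rw [← hval, hh2]⟩
    have hlow : b < c * d * ‖u‖ ^ 2 := by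
      have hcd : c * d * ‖u‖ ^ 2 = (1 / 2) * (Real.sqrt t)⁻¹ * ‖u‖ := by
        have h3 : ‖u‖⁻¹ * ‖u‖ ^ 2 = ‖u‖ := by
          rw [pow_two, ← mul_assoc, inv_mul_cancel₀ (ne_of_gt hub'), one_mul]
        calc c * d * ‖u‖ ^ 2
            = ((Real.sqrt 2)⁻¹ * (Real.sqrt 2)⁻¹) * (Real.sqrt t)⁻¹ * (‖u‖⁻¹ * ‖u‖ ^ 2) := by
              rw [hc, hd, mul_inv]
              ring
          _ = (1 / 2) * (Real.sqrt t)⁻¹ * ‖u‖ := by rw [hhalf, h3]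
      have hst1 : Real.sqrt t ≤ 1 := by
        rw [show (1:ℝ) = Real.sqrt 1 from Real.sqrt_one.symm]
        exact Real.sqrt_le_sqrt hy1
      have hinv : 1 ≤ (Real.sqrt t)⁻¹ := one_le_inv_iff₀.mpr ⟨htp, hst1⟩
      rw [hcd]
      calc b < (1 / 2) * ‖u‖ := by linarith
        _ ≤ (1 / 2) * (Real.sqrt t)⁻¹ * ‖u‖ := by nlinarith [norm_nonneg u]
    exact lt_of_lt_of_le hlow (le_csSup hbdd hmem)
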